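/- arXiv:1803.08700 — 2 statements merged into one kernel-verified Lean document; each statement's English description precedes it below -/
import Mathlib

section
/- Let X = {x_1,…,x_N} ⊂ ℝ^d with Σ_j x_j = 0 and N ≥ 1, and assume v := (1/N) Σ_j ‖x_j‖² > 0. For the 1-means cost f(x,c) = ‖x − c‖², the sensitivity σ_i = sup_{c ∈ ℝ^d} ‖x_i − c‖² / Σ_j ‖x_j − c‖² satisfies σ_i = (1/N)(1 + ‖x_i‖²/v). -/
open Finset

/-- explicit formula for the sensitivity in the 1-means case. -/
theorem one_means_sensitivity {d N : ℕ} (hN : 0 < N)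
    (x : Fin N → EuclideanSpace ℝ (Fin d))
    (hcent : ∑ j, x j = 0)
    (v : ℝ) (hv : v = (1 / (N : ℝ)) * ∑ j, ‖x j‖ ^ 2) (hvpos : 0 < v)
    (i : Fin N) :
    (⨆ c : EuclideanSpace ℝ (Fin d), ‖x i - c‖ ^ 2 / ∑ j, ‖x j - c‖ ^ 2)
      = (1 / (N : ℝ)) * (1 + ‖x i‖ ^ 2 / v) := by
  have hNne : (N:ℝ) ≠ 0 := Nat.cast_ne_zero.mpr hN.ne'
  have hNpos : (0:ℝ) < N := by positivity
  -- denominator formula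
  have hsum : ∀ c : EuclideanSpace ℝ (Fin d),
      ∑ j, ‖x j - c‖ ^ 2 = N * v + N * ‖c‖ ^ 2 := by
    intro c
    have hexp : ∀ j : Fin N, ‖x j - c‖ ^ 2
        = ‖x j‖ ^ 2 - 2 * inner ℝ (x j) c + ‖c‖ ^ 2 := fun j => norm_sub_sq_real _ _
    rw [Finset.sum_congr rfl fun j _ => hexp j]
    rw [Finset.sum_add_distrib, Finset.sum_sub_distrib, ← Finset.mul_sum, ← sum_inner, hcent]
    simp [Finset.sum_const, hv]
    field_simp
  -- upper bound
  have hub : ∀ c : EuclideanSpace ℝ (Fin d),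
      ‖x i - c‖ ^ 2 / ∑ j, ‖x j - c‖ ^ 2 ≤ (1 / (N : ℝ)) * (1 + ‖x i‖ ^ 2 / v) := by
    intro c
    rw [hsum c]
    have hden : (0:ℝ) < N * v + N * ‖c‖ ^ 2 := by positivity
    have hcs : -(‖x i‖ * ‖c‖) ≤ (inner ℝ (x i) c : ℝ) :=
      neg_le_of_abs_le (abs_real_inner_le_norm _ _)
    have hexp : ‖x i - c‖ ^ 2 = ‖x i‖ ^ 2 - 2 * inner ℝ (x i) c + ‖c‖ ^ 2 :=
      norm_sub_sq_real _ _
    have key2 : ‖x i - c‖ ^ 2 * v ≤ (v + ‖x i‖ ^ 2) * (v + ‖c‖ ^ 2) := by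
      rw [hexp]
      nlinarith [sq_nonneg (v - ‖x i‖ * ‖c‖),
        mul_le_mul_of_nonneg_left hcs hvpos.le]
    have h1 : (1 / (N : ℝ)) * (1 + ‖x i‖ ^ 2 / v) = (v + ‖x i‖ ^ 2) / (N * v) := by
      field_simp
    rw [h1, div_le_div_iff₀ hden (by positivity)]
    nlinarith [mul_le_mul_of_nonneg_right key2 hNpos.le,
      mul_nonneg (mul_nonneg hNpos.le hvpos.le) (sq_nonneg ‖c‖),
      mul_nonneg (mul_nonneg hNpos.le (sq_nonneg ‖x i‖)) (sq_nonneg ‖c‖)]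
  have hbdd : BddAbove (Set.range fun c : EuclideanSpace ℝ (Fin d) =>
      ‖x i - c‖ ^ 2 / ∑ j, ‖x j - c‖ ^ 2) :=
    ⟨_, Set.forall_mem_range.mpr hub⟩
  apply le_antisymm (ciSup_le hub)
  by_cases hxi : x i = 0
  · -- limit case
    have hex : ∃ j0 : Fin N, x j0 ≠ 0 := by
      by_contra h
      push_neg at h
      simp [h] at hv
      rw [hv] at hvpos; exact lt_irrefl 0 hvpos
    obtain ⟨j0, hj0⟩ := hex
    have hr : (0:ℝ) < ‖x j0‖ := norm_pos_iff.mpr hj0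
    set r : ℝ := ‖x j0‖ with hrr
    have hval : ∀ t : ℝ, 1 ≤ t →
        ‖x i - t • x j0‖ ^ 2 / ∑ j, ‖x j - t • x j0‖ ^ 2
        = 1 / ((N * v) * (t ^ 2 * r ^ 2)⁻¹ + N) := by
      intro t ht
      have ht0 : (0:ℝ) < t := lt_of_lt_of_le one_pos ht
      rw [hsum, hxi, zero_sub, norm_neg, norm_smul, Real.norm_eq_abs, abs_of_pos ht0,
        mul_pow]
      have htr : (0:ℝ) < t ^ 2 * r ^ 2 := by positivity
      field_simp
      rw [← hrr]; ring
    have htend : Filter.Tendsto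
        (fun t : ℝ => ‖x i - t • x j0‖ ^ 2 / ∑ j, ‖x j - t • x j0‖ ^ 2)
        Filter.atTop (nhds (1 / (N:ℝ))) := by
      have h1 : Filter.Tendsto (fun t : ℝ => (N * v) * (t ^ 2 * r ^ 2)⁻¹ + (N:ℝ))
          Filter.atTop (nhds ((N * v) * 0 + N)) := by
        apply Filter.Tendsto.add_const
        apply Filter.Tendsto.const_mul
        apply Filter.Tendsto.inv_tendsto_atTop
        apply Filter.Tendsto.atTop_mul_const (by positivity : (0:ℝ) < r ^ 2)
        exact Filter.tendsto_pow_atTop (by norm_num)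
      have h2 : Filter.Tendsto (fun t : ℝ => 1 / ((N * v) * (t ^ 2 * r ^ 2)⁻¹ + (N:ℝ)))
          Filter.atTop (nhds (1 / (N:ℝ))) := by
        have h2' := h1.inv₀ (by simp [hNne])
        simp only [mul_zero, zero_add] at h2'
        simpa [one_div] using h2'
      apply h2.congr'
      filter_upwards [Filter.eventually_ge_atTop (1:ℝ)] with t ht
      exact (hval t ht).symm
    have hle : ∀ᶠ t : ℝ in Filter.atTop,
        ‖x i - t • x j0‖ ^ 2 / ∑ j, ‖x j - t • x j0‖ ^ 2
        ≤ ⨆ c : EuclideanSpace ℝ (Fin d), ‖x i - c‖ ^ 2 / ∑ j, ‖x j - c‖ ^ 2 := by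
      filter_upwards with t
      exact le_ciSup hbdd _
    have hfin := le_of_tendsto htend hle
    calc (1 / (N : ℝ)) * (1 + ‖x i‖ ^ 2 / v)
        = 1 / (N:ℝ) := by rw [hxi]; simp
      _ ≤ _ := hfin
  · -- attained case
    set A : ℝ := ‖x i‖ ^ 2 with hAdef
    have hA : (0:ℝ) < A := by
      rw [hAdef]
      have : (0:ℝ) < ‖x i‖ := norm_pos_iff.mpr hxi
      positivity
    set cstar : EuclideanSpace ℝ (Fin d) := (-(v / A)) • x i with hcdef
    have hxc : x i - cstar = (1 + v / A) • x i := by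
      rw [hcdef, neg_smul, sub_neg_eq_add, add_smul, one_smul]
    have hkey : (1 / (N : ℝ)) * (1 + ‖x i‖ ^ 2 / v)
        = ‖x i - cstar‖ ^ 2 / ∑ j, ‖x j - cstar‖ ^ 2 := by
      rw [hsum, hxc, norm_smul, hcdef, norm_smul]
      simp only [Real.norm_eq_abs]
      rw [abs_of_pos (by positivity : (0:ℝ) < 1 + v / A),
        abs_neg, abs_of_pos (by positivity : (0:ℝ) < v / A), mul_pow, mul_pow, ← hAdef]
      field_simp
      ring
    rw [hkey]
    exact le_ciSup hbdd cstar
end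

section
/- Let Θ be a metric space, f : X × Θ → ℝ≥0 with f(x,·) γ-Lipschitz for each x ∈ X (|X| = N), L(θ) = Σ_{x∈X} f(x,θ), and L̂(θ) = Σ_i f(x_i,θ) ε_i/π_i for fixed indicators ε_i ∈ {0,1} and π_i > 0. Suppose (i) |(Σ_i ε_i/π_i)/N − 1| ≤ ε/2, and (ii) for every θ* in an ε'-net Γ of Θ, |L̂(θ*)/L(θ*) − 1| ≤ ε/2, where ε' = ε L_opt/(6Nγ) with L_opt = min_θ L(θ) > 0. Then for all θ ∈ Θ, |L̂(θ)/L(θ) − 1| ≤ ε. (Continuity/ε-net step of the DPP coreset theorem.) -/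
open Finset

/-- the continuity / ε-net step of the DPP coreset theorem. -/
theorem coreset_net_continuity_step {Θ : Type*} [MetricSpace Θ] {N : ℕ}
    (f : Fin N → Θ → ℝ) (γ ε Lopt : ℝ)
    (hN : 0 < N) (hγ : 0 < γ) (hε : 0 < ε) (hε1 : ε < 1)
    (hf : ∀ i θ, 0 ≤ f i θ)
    (hLip : ∀ i θ θ', |f i θ - f i θ'| ≤ γ * dist θ θ')
    (eps π : Fin N → ℝ)
    (heps : ∀ i, eps i = 0 ∨ eps i = 1) (hπ : ∀ i, 0 < π i)
    (L Lhat : Θ → ℝ)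
    (hL : ∀ θ, L θ = ∑ i, f i θ)
    (hLhat : ∀ θ, Lhat θ = ∑ i, f i θ * eps i / π i)
    (hLoptpos : 0 < Lopt)
    (hglb : IsGLB (Set.range L) Lopt)
    (Γ : Set Θ)
    (hnet : ∀ θ : Θ, ∃ θs ∈ Γ, dist θ θs ≤ ε * Lopt / (6 * N * γ))
    (hsize : |(∑ i, eps i / π i) / N - 1| ≤ ε / 2)
    (hgrid : ∀ θs ∈ Γ, |Lhat θs / L θs - 1| ≤ ε / 2) :
    ∀ θ, |Lhat θ / L θ - 1| ≤ ε := by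
  intro θ
  obtain ⟨θs, hθsΓ, hdist⟩ := hnet θ
  set ε' := ε * Lopt / (6 * N * γ) with hε'def
  have hNpos : (0:ℝ) < N := Nat.cast_pos.mpr hN
  have hε'pos : 0 < ε' := by positivity
  have hLlb : ∀ t, Lopt ≤ L t := fun t => hglb.1 ⟨t, rfl⟩
  have hLθpos : 0 < L θ := lt_of_lt_of_le hLoptpos (hLlb θ)
  have hLθspos : 0 < L θs := lt_of_lt_of_le hLoptpos (hLlb θs)
  have hepsnn : ∀ i, 0 ≤ eps i / π i := by
    intro i
    rcases heps i with h | h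
    · simp [h]
    · rw [h]; exact le_of_lt (div_pos one_pos (hπ i))
  set S := ∑ i, eps i / π i with hSdef
  have hS0 : 0 ≤ S := Finset.sum_nonneg fun i _ => hepsnn i
  have hSle : S ≤ (1 + ε / 2) * N := by
    have h := (abs_le.mp hsize).2
    have h2 : S / N ≤ 1 + ε / 2 := by linarith
    rw [div_le_iff₀ hNpos] at h2
    linarith
  -- key: N γ ε' = ε Lopt / 6
  have hkey : (N : ℝ) * γ * ε' = ε * Lopt / 6 := by
    rw [hε'def]; field_simp
  have hkey2 : (N : ℝ) * γ * ε' ≤ ε * L θ / 6 := by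
    rw [hkey]
    have := hLlb θ
    nlinarith
  -- bound 1 : |Lhat θ - Lhat θs| ≤ γ * ε' * S
  have hb1 : |Lhat θ - Lhat θs| ≤ γ * ε' * S := by
    rw [hLhat, hLhat, ← Finset.sum_sub_distrib]
    calc |∑ i, (f i θ * eps i / π i - f i θs * eps i / π i)|
        ≤ ∑ i, |f i θ * eps i / π i - f i θs * eps i / π i| :=
          Finset.abs_sum_le_sum_abs _ _
      _ ≤ ∑ i, γ * ε' * (eps i / π i) := by
          refine Finset.sum_le_sum fun i _ => ?_
          have : f i θ * eps i / π i - f i θs * eps i / π i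
              = (f i θ - f i θs) * (eps i / π i) := by ring
          rw [this, abs_mul, abs_of_nonneg (hepsnn i)]
          have h1 : |f i θ - f i θs| ≤ γ * ε' :=
            le_trans (hLip i θ θs) (by nlinarith [hLip i θ θs, hγ.le])
          exact mul_le_mul_of_nonneg_right h1 (hepsnn i)
      _ = γ * ε' * S := by rw [← Finset.mul_sum]
  -- bound 2 : |L θ - L θs| ≤ N * γ * ε'
  have hb2 : |L θ - L θs| ≤ (N : ℝ) * γ * ε' := by
    rw [hL, hL, ← Finset.sum_sub_distrib]
    calc |∑ i, (f i θ - f i θs)| ≤ ∑ i, |f i θ - f i θs| :=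
          Finset.abs_sum_le_sum_abs _ _
      _ ≤ ∑ _i : Fin N, γ * ε' := by
          refine Finset.sum_le_sum fun i _ => ?_
          exact le_trans (hLip i θ θs) (by nlinarith)
      _ = (N : ℝ) * γ * ε' := by simp [mul_assoc]
  -- bound 3 : |Lhat θs - L θs| ≤ (ε/2) * L θs
  have hb3 : |Lhat θs - L θs| ≤ ε / 2 * L θs := by
    have h := hgrid θs hθsΓ
    have : Lhat θs / L θs - 1 = (Lhat θs - L θs) / L θs := by
      field_simp
    rw [this, abs_div, abs_of_pos hLθspos, div_le_iff₀ hLθspos] at h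
    linarith
  have hLθs : L θs ≤ L θ + (N : ℝ) * γ * ε' := by
    have := (abs_le.mp hb2).1; linarith
  have hmain : |Lhat θ - L θ| ≤ ε * L θ := by
    calc |Lhat θ - L θ|
        ≤ |Lhat θ - Lhat θs| + |Lhat θs - L θs| + |L θs - L θ| := by
          have := abs_sub_le (Lhat θ) (Lhat θs) (L θ)
          have := abs_sub_le (Lhat θs) (L θs) (L θ)
          linarith [abs_sub_le (Lhat θ) (Lhat θs) (L θ),
            abs_sub_le (Lhat θs) (L θs) (L θ)]
      _ ≤ γ * ε' * S + ε / 2 * L θs + (N : ℝ) * γ * ε' := by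
          rw [abs_sub_comm (L θs) (L θ)]
          linarith
      _ ≤ ε * L θ := by
          have h1 : γ * ε' * S ≤ (1 + ε / 2) * ((N : ℝ) * γ * ε') := by
            have hm := mul_le_mul_of_nonneg_left hSle
              (show (0:ℝ) ≤ γ * ε' by positivity)
            have hr : γ * ε' * ((1 + ε / 2) * (N : ℝ))
                = (1 + ε / 2) * ((N : ℝ) * γ * ε') := by ring
            linarith
          have h2 : ε / 2 * L θs ≤ ε / 2 * (L θ + (N : ℝ) * γ * ε') :=
            mul_le_mul_of_nonneg_left hLθs (by linarith)
          have hApos : (0:ℝ) < (N : ℝ) * γ * ε' := by positivity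
          have h3 : ε * ((N : ℝ) * γ * ε') ≤ (N : ℝ) * γ * ε' := by
            nlinarith
          nlinarith [hkey2, h1, h2, h3]
  have : Lhat θ / L θ - 1 = (Lhat θ - L θ) / L θ := by field_simp
  rw [this, abs_div, abs_of_pos hLθpos, div_le_iff₀ hLθpos]
  linarith
end
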